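/- Let X be a complex Banach space, T a bounded linear operator on X, and S a generalized Drazin inverse of T (i.e., ST = TS, STS = S, and TST − T is quasinilpotent). Then T has Bishop's property (β) if and only if S has Bishop's property (β). -/

import Mathlib

open Filter Topology Set

namespace Paper

variable {Y : Type*} [NormedAddCommGroup Y] [NormedSpace ℂ Y]

/-- A bounded operator `A` is quasinilpotent if `‖Aⁿ‖^(1/n) → 0`. -/
def IsQuasinilpotent (A : Y →L[ℂ] Y) : Prop :=
  Tendsto (fun n : ℕ => ‖A ^ n‖ ^ (1 / (n : ℝ))) atTop (nhds (0 : ℝ))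

/-- `A` is semi-regular if its range is closed and `ker (Aⁿ) ⊆ ran A` for all `n`. -/
def SemiRegular (A : Y →L[ℂ] Y) : Prop :=
  IsClosed (Set.range A) ∧ ∀ n : ℕ, ∀ x : Y, (A ^ n) x = 0 → x ∈ Set.range A

/-- `A` has the single-valued extension property at `l0`. -/
def HasSVEPAt (A : Y →L[ℂ] Y) (l0 : ℂ) : Prop :=
  ∀ U : Set ℂ, IsOpen U → l0 ∈ U → ∀ f : ℂ → Y, AnalyticOnNhd ℂ f U →
    (∀ l ∈ U, l • f l - A (f l) = 0) → ∀ l ∈ U, f l = 0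

/-- `A` has the single-valued extension property (at every point). -/
def HasSVEP (A : Y →L[ℂ] Y) : Prop := ∀ l : ℂ, HasSVEPAt A l

/-- `A` is bounded below: injective with closed range. -/
def BoundedBelow (A : Y →L[ℂ] Y) : Prop :=
  Function.Injective A ∧ IsClosed (Set.range A)

variable {X : Type*} [NormedAddCommGroup X] [NormedSpace ℂ X] [CompleteSpace X]

/-- The quasinilpotent part `H₀(T)` of `T`. -/
def quasinilpotentPart (T : X →L[ℂ] X) : Set X :=
  {x : X | Tendsto (fun n : ℕ => ‖(T ^ n) x‖ ^ (1 / (n : ℝ))) atTop (nhds (0 : ℝ))}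

/-- The analytic core `K(T)` of `T`. -/
def analyticCore (T : X →L[ℂ] X) : Set X :=
  {x : X | ∃ (u : ℕ → X) (δ : ℝ), 0 < δ ∧ T (u 1) = x ∧
    (∀ n : ℕ, 1 ≤ n → T (u (n + 1)) = u n) ∧ (∀ n : ℕ, 1 ≤ n → ‖u n‖ ≤ δ ^ n * ‖x‖)}

/-- Restriction of `T` to an invariant subspace `M`, as a continuous linear operator on `M`. -/
def restrictCLM (T : X →L[ℂ] X) (M : Submodule ℂ X) (h : ∀ x ∈ M, T x ∈ M) : M →L[ℂ] M :=
  { toLinearMap := (T : X →ₗ[ℂ] X).restrict h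
    cont := (T.continuous.comp continuous_subtype_val).subtype_mk _ }

/-- `(M, N)` is a generalized Kato decomposition of `T`. -/
structure IsGKD (T : X →L[ℂ] X) (M N : Submodule ℂ X) : Prop where
  closedM : IsClosed (M : Set X)
  closedN : IsClosed (N : Set X)
  invM : ∀ x ∈ M, T x ∈ M
  invN : ∀ x ∈ N, T x ∈ N
  compl : IsCompl M N
  semiregM : SemiRegular (restrictCLM T M invM)
  quasiN : IsQuasinilpotent (restrictCLM T N invN)

/-- `T` admits a generalized Kato decomposition. -/
def HasGKD (T : X →L[ℂ] X) : Prop := ∃ M N : Submodule ℂ X, IsGKD T M N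

/-- `T` is left generalized Drazin invertible. -/
def LeftGDInvertible (T : X →L[ℂ] X) : Prop :=
  IsClosed (quasinilpotentPart T) ∧
  ∃ M : Submodule ℂ X, IsClosed (M : Set X) ∧ (∀ x ∈ M, T x ∈ M) ∧
    IsClosed (T '' (M : Set X)) ∧
    (M : Set X) ∩ quasinilpotentPart T = {0} ∧
    (∀ x : X, ∃ m ∈ M, ∃ h ∈ quasinilpotentPart T, x = m + h)

/-- `T` is right generalized Drazin invertible. -/
def RightGDInvertible (T : X →L[ℂ] X) : Prop :=
  IsClosed (analyticCore T) ∧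
  ∃ N : Submodule ℂ X, IsClosed (N : Set X) ∧ (∀ x ∈ N, T x ∈ N) ∧
    (N : Set X) ⊆ quasinilpotentPart T ∧
    analyticCore T ∩ (N : Set X) = {0} ∧
    (∀ x : X, ∃ k ∈ analyticCore T, ∃ h ∈ N, x = k + h)

/-- The approximate point spectrum. -/
def sigmaAp (T : X →L[ℂ] X) : Set ℂ :=
  {l : ℂ | ¬ BoundedBelow (l • ContinuousLinearMap.id ℂ X - T)}

/-- The surjective spectrum. -/
def sigmaSu (T : X →L[ℂ] X) : Set ℂ :=
  {l : ℂ | ¬ Function.Surjective (l • ContinuousLinearMap.id ℂ X - T)}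

/-- The left generalized Drazin spectrum. -/
def sigmaLgD (T : X →L[ℂ] X) : Set ℂ :=
  {l : ℂ | ¬ LeftGDInvertible (l • ContinuousLinearMap.id ℂ X - T)}

/-- The right generalized Drazin spectrum. -/
def sigmaRgD (T : X →L[ℂ] X) : Set ℂ :=
  {l : ℂ | ¬ RightGDInvertible (l • ContinuousLinearMap.id ℂ X - T)}

/-- The generalized Kato spectrum. -/
def sigmaGK (T : X →L[ℂ] X) : Set ℂ :=
  {l : ℂ | ¬ HasGKD (l • ContinuousLinearMap.id ℂ X - T)}

/-- The set of points where `T` fails to have the SVEP. -/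
def svepFailSet (T : X →L[ℂ] X) : Set ℂ := {l : ℂ | ¬ HasSVEPAt T l}

/-- The adjoint `T*` of `T`, acting on the dual space, `(T* φ) x = φ (T x)`. -/
noncomputable def adjointDual (T : X →L[ℂ] X) :
    StrongDual ℂ X →L[ℂ] StrongDual ℂ X :=
  (ContinuousLinearMap.compL ℂ X X ℂ).flip T

/-- The local resolvent set of `T` at `x`. -/
def localResolvent (T : X →L[ℂ] X) (x : X) : Set ℂ :=
  ⋃₀ {U : Set ℂ | IsOpen U ∧ ∃ f : ℂ → X, AnalyticOnNhd ℂ f U ∧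
      ∀ l ∈ U, l • f l - T (f l) = x}

/-- The local spectrum of `T` at `x`. -/
def localSpectrum (T : X →L[ℂ] X) (x : X) : Set ℂ := (localResolvent T x)ᶜ

/-- The local spectral subspace `X_T(Ω)`. -/
def localSpectralSubspace (T : X →L[ℂ] X) (Ω : Set ℂ) : Set X :=
  {x : X | localSpectrum T x ⊆ Ω}

/-- Dunford's property `(C)`. -/
def HasPropertyC (T : X →L[ℂ] X) : Prop :=
  ∀ Ω : Set ℂ, IsClosed Ω → IsClosed (localSpectralSubspace T Ω)

/-- Bishop's property `(β)`. -/
def HasPropertyBeta (T : X →L[ℂ] X) : Prop :=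
  ∀ U : Set ℂ, IsOpen U → ∀ f : ℕ → ℂ → X, (∀ n, AnalyticOnNhd ℂ (f n) U) →
    (∀ K : Set ℂ, K ⊆ U → IsCompact K →
      TendstoUniformlyOn (fun n l => l • f n l - T (f n l)) (fun _ => 0) atTop K) →
    ∀ K : Set ℂ, K ⊆ U → IsCompact K →
      TendstoUniformlyOn (fun n l => f n l) (fun _ => 0) atTop K

/-- `S` is a generalized Drazin inverse of `T`. -/
def IsGDInverse (T S : X →L[ℂ] X) : Prop :=
  S * T = T * S ∧ S * T * S = S ∧ IsQuasinilpotent (T * S * T - T)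

/-!
Let `E = TS`, an idempotent commuting with `T` and `S`. On the range of `1 - E` the operator `S`
vanishes and `T` acts as the quasinilpotent `T - TST`; on the range of `E`, `S` and `T` are
inverse to each other. Both directions therefore follow from one transfer principle for commuting
`A`, `B` with `AB` idempotent and `(1 - AB) B` quasinilpotent, proved by splitting
`f = (1 - E) f + E f`. The first part is governed by `Q = (1 - E) B`, which has (β) because
`λ - Q` is invertible, with continuous resolvent, for `λ ≠ 0`. For the second,
`AE (λ - B) f = (λA - 1) (E f)`, so `(μ - A)` applied to `μ ↦ E f (μ⁻¹)` tends to `0` and (β) of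
`A` applies. Both arguments miss the point `λ = 0`, which the maximum modulus principle recovers.
-/

theorem _root_.TendstoLocallyUniformlyOn.clm_apply_zero {α ι 𝕜 E F : Type*} [TopologicalSpace α]
    [NontriviallyNormedField 𝕜] [SeminormedAddCommGroup E] [NormedSpace 𝕜 E]
    [SeminormedAddCommGroup F] [NormedSpace 𝕜 F] {p : Filter ι} {s : Set α}
    {A : α → E →L[𝕜] F} (hA : ContinuousOn A s)
    {g : ι → α → E} (hg : TendstoLocallyUniformlyOn g 0 p s) :
    TendstoLocallyUniformlyOn (fun n x => A x (g n x)) 0 p s := by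
  rw [Metric.tendstoLocallyUniformlyOn_iff] at hg ⊢
  intro ε hε x hx
  set C := ‖A x‖ + 1
  have hC : 0 < C := by positivity
  obtain ⟨t, ht, hgt⟩ := hg (ε / C) (by positivity) x hx
  have hbound : ∀ᶠ y in 𝓝[s] x, ‖A y‖ ≤ C :=
    (hA x hx).norm.eventually (ge_mem_nhds (lt_add_one _))
  refine ⟨t ∩ {y | ‖A y‖ ≤ C}, inter_mem ht hbound, hgt.mono fun n hn y hy => ?_⟩
  have hgy := hn y hy.1
  simp only [Pi.zero_apply, dist_zero_left] at hgy ⊢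
  calc ‖A y (g n y)‖ ≤ ‖A y‖ * ‖g n y‖ := (A y).le_opNorm _
    _ < C * (ε / C) := mul_lt_mul' hy.2 hgy (norm_nonneg _) hC
    _ = ε := mul_div_cancel₀ ε hC.ne'

theorem tendstoLocallyUniformlyOn_zero_of_diff_singleton {ι E : Type*} [NormedAddCommGroup E]
    [NormedSpace ℂ E] {p : Filter ι} {f : ι → ℂ → E} {U : Set ℂ} (hU : IsOpen U)
    (hf : ∀ n, DifferentiableOn ℂ (f n) U) (c : ℂ)
    (h : TendstoLocallyUniformlyOn f 0 p (U \ {c})) : TendstoLocallyUniformlyOn f 0 p U := by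
  have hU' : IsOpen (U \ {c}) := hU.sdiff isClosed_singleton
  rw [Metric.tendstoLocallyUniformlyOn_iff]
  intro ε hε x hx
  rcases eq_or_ne x c with rfl | hxc
  · obtain ⟨r, hr, hball⟩ := Metric.isOpen_iff.mp hU x hx
    have hsub : Metric.closedBall x (r / 2) ⊆ U :=
      (Metric.closedBall_subset_ball (half_lt_self hr)).trans hball
    have hsphere : Metric.sphere x (r / 2) ⊆ U \ {x} := fun z hz =>
      ⟨hsub (Metric.sphere_subset_closedBall hz),
        fun hzx => by
          rw [Set.mem_singleton_iff.mp hzx, Metric.mem_sphere, dist_self] at hz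
          exact (half_pos hr).ne hz⟩
    have hconv := Metric.tendstoUniformlyOn_iff.mp
      ((tendstoLocallyUniformlyOn_iff_forall_isCompact hU').mp h _ hsphere (isCompact_sphere _ _))
      (ε / 2) (half_pos hε)
    refine ⟨Metric.ball x (r / 2),
      mem_nhdsWithin_of_mem_nhds (Metric.ball_mem_nhds x (half_pos hr)),
      hconv.mono fun n hn y hy => ?_⟩
    have hmax : ‖f n y‖ ≤ ε / 2 := by
      refine Complex.norm_le_of_forall_mem_frontier_norm_le Metric.isBounded_ball
        ((hf n).diffContOnCl_ball hsub) (fun z hz => ?_) (subset_closure hy)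
      rw [frontier_ball x (half_pos hr).ne'] at hz
      simpa using (hn z hz).le
    simpa using hmax.trans_lt (half_lt_self hε)
  · obtain ⟨t, ht, hft⟩ := Metric.tendstoLocallyUniformlyOn_iff.mp h ε hε x ⟨hx, hxc⟩
    rw [hU'.nhdsWithin_eq ⟨hx, hxc⟩] at ht
    exact ⟨t, mem_nhdsWithin_of_mem_nhds ht, hft⟩

theorem hasPropertyBeta_iff {T : Y →L[ℂ] Y} :
    HasPropertyBeta T ↔ ∀ U : Set ℂ, IsOpen U → ∀ f : ℕ → ℂ → Y, (∀ n, AnalyticOnNhd ℂ (f n) U) →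
      TendstoLocallyUniformlyOn (fun n l => l • f n l - T (f n l)) 0 atTop U →
      TendstoLocallyUniformlyOn f 0 atTop U := by
  refine forall₂_congr fun U hU => forall₂_congr fun f _ => ?_
  simp only [tendstoLocallyUniformlyOn_iff_forall_isCompact hU]
  rfl

theorem isQuasinilpotent_zero : IsQuasinilpotent (0 : Y →L[ℂ] Y) := by
  refine tendsto_const_nhds.congr' ?_
  filter_upwards [eventually_ne_atTop 0] with n hn
  rw [zero_pow hn, norm_zero, Real.zero_rpow (by positivity)]

theorem IsQuasinilpotent.neg {Q : Y →L[ℂ] Y} (hQ : IsQuasinilpotent Q) :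
    IsQuasinilpotent (-Q) := by
  refine hQ.congr fun n => ?_
  rw [neg_pow]
  rcases neg_one_pow_eq_or (Y →L[ℂ] Y) n with h | h <;> simp [h]

theorem IsQuasinilpotent.spectralRadius_eq_zero {Q : X →L[ℂ] X} (hQ : IsQuasinilpotent Q) :
    spectralRadius ℂ Q = 0 :=
  tendsto_nhds_unique (spectrum.pow_norm_pow_one_div_tendsto_nhds_spectralRadius Q)
    (by simpa using ENNReal.tendsto_ofReal hQ)

theorem IsQuasinilpotent.mem_resolventSet {Q : X →L[ℂ] X} (hQ : IsQuasinilpotent Q) {k : ℂ}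
    (hk : k ≠ 0) : k ∈ resolventSet ℂ Q :=
  spectrum.mem_resolventSet_of_spectralRadius_lt (by simpa [hQ.spectralRadius_eq_zero] using hk)

theorem resolvent_apply_smul_sub {A : Y →L[ℂ] Y} {k : ℂ} (hk : k ∈ resolventSet ℂ A) (v : Y) :
    resolvent A k (k • v - A v) = v := by
  have h := congrArg (· v) (Ring.inverse_mul_cancel _ hk)
  simpa [resolvent, Algebra.algebraMap_eq_smul_one] using h

theorem IsQuasinilpotent.hasPropertyBeta {Q : X →L[ℂ] X} (hQ : IsQuasinilpotent Q) :
    HasPropertyBeta Q := by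
  rw [hasPropertyBeta_iff]
  intro U hU f hf hconv
  refine tendstoLocallyUniformlyOn_zero_of_diff_singleton hU (fun n => (hf n).differentiableOn) 0 ?_
  have hres : ContinuousOn (resolvent Q) (U \ {0}) := fun k hk =>
    (spectrum.hasDerivAt_resolvent_const_left (hQ.mem_resolventSet hk.2)).continuousAt
      |>.continuousWithinAt
  exact ((hconv.mono sdiff_subset).clm_apply_zero hres).congr fun n k hk =>
    resolvent_apply_smul_sub (hQ.mem_resolventSet hk.2) (f n k)

theorem HasPropertyBeta.tendstoLocallyUniformlyOn_of_smul_apply_sub {A : Y →L[ℂ] Y}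
    (hA : HasPropertyBeta A) {U : Set ℂ} (hU : IsOpen U) {w : ℕ → ℂ → Y}
    (hw : ∀ n, AnalyticOnNhd ℂ (w n) U)
    (h : TendstoLocallyUniformlyOn (fun n l => l • A (w n l) - w n l) 0 atTop U) :
    TendstoLocallyUniformlyOn w 0 atTop (U \ {0}) := by
  set V : Set ℂ := {0}ᶜ ∩ (·⁻¹) ⁻¹' U
  have hV : IsOpen V := continuousOn_inv₀.isOpen_inter_preimage isOpen_compl_singleton hU
  have hinvV : MapsTo (·⁻¹) V U := fun μ hμ => hμ.2
  have hinvU : MapsTo (·⁻¹) (U \ {0}) V := fun l hl =>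
    ⟨inv_ne_zero hl.2, by simpa only [mem_preimage, inv_inv] using hl.1⟩
  have hwV : ∀ n, AnalyticOnNhd ℂ (fun μ => w n μ⁻¹) V := fun n μ hμ =>
    (hw n μ⁻¹ hμ.2).comp (analyticAt_inv hμ.1)
  -- `μ • w μ⁻¹ - A (w μ⁻¹) = -μ • (μ⁻¹ • A (w μ⁻¹) - w μ⁻¹)`
  have hconvV : TendstoLocallyUniformlyOn (fun n μ => μ • w n μ⁻¹ - A (w n μ⁻¹)) 0 atTop V := by
    refine ((h.comp _ hinvV (continuousOn_inv₀.mono inter_subset_left)).clm_apply_zero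
      (A := fun μ : ℂ => -μ • ContinuousLinearMap.id ℂ Y) (by fun_prop)).congr fun n μ hμ => ?_
    simp [smul_sub, smul_smul, mul_inv_cancel₀ (show μ ≠ 0 from hμ.1)]
  have hgV := hasPropertyBeta_iff.mp hA V hV _ hwV hconvV
  exact (hgV.comp _ hinvU (continuousOn_inv₀.mono fun l hl => hl.2)).congr fun n l _ => by simp

theorem HasPropertyBeta.of_commute_of_isIdempotentElem {A B : X →L[ℂ] X} (hA : HasPropertyBeta A)
    (hAB : Commute A B) (hE : IsIdempotentElem (A * B))
    (hQ : IsQuasinilpotent ((1 - A * B) * B)) : HasPropertyBeta B := by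
  set E := A * B
  set P := 1 - E
  have hPB : Commute P B := (Commute.one_left B).sub_left (hAB.mul_left (Commute.refl B))
  have hP : IsIdempotentElem P := hE.one_sub
  have hPcomp : ∀ (l : ℂ) (v : X), l • P v - (P * B) (P v) = P (l • v - B v) := by
    intro l v
    have : P * B * P = P * B := by rw [mul_assoc, ← hPB.eq, ← mul_assoc, hP.eq]
    calc l • P v - (P * B) (P v) = l • P v - (P * B * P) v := rfl
      _ = P (l • v - B v) := by rw [this, map_sub, map_smul]; rfl
  have hEcomp : ∀ (l : ℂ) (v : X), l • A (E v) - E v = (A * E) (l • v - B v) := by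
    intro l v
    have : A * E * B = E := by
      calc A * E * B = A * (B * A) * B := by rw [← hAB.eq]
        _ = E * E := by simp only [E, mul_assoc]
        _ = E := hE.eq
    calc l • A (E v) - E v = l • (A * E) v - (A * E * B) v := by rw [this]; rfl
      _ = (A * E) (l • v - B v) := by rw [map_sub, map_smul]; rfl
  rw [hasPropertyBeta_iff]
  intro U hU f hf hconv
  have hPf : TendstoLocallyUniformlyOn (fun n l => P (f n l)) 0 atTop U :=
    hasPropertyBeta_iff.mp hQ.hasPropertyBeta U hU _ (fun n => P.comp_analyticOnNhd (hf n))
      ((hconv.clm_apply_zero continuousOn_const).congr fun n l _ => (hPcomp l (f n l)).symm)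
  have hEf : TendstoLocallyUniformlyOn (fun n l => E (f n l)) 0 atTop U := by
    refine tendstoLocallyUniformlyOn_zero_of_diff_singleton hU
      (fun n => (E.comp_analyticOnNhd (hf n)).differentiableOn) 0 ?_
    exact hA.tendstoLocallyUniformlyOn_of_smul_apply_sub hU (fun n => E.comp_analyticOnNhd (hf n))
      ((hconv.clm_apply_zero continuousOn_const).congr fun n l _ => (hEcomp l (f n l)).symm)
  exact (hPf.add hEf).congr (fun n l _ => by simp [P]) |>.congr_right fun _ _ => add_zero 0

/-- `T` has Bishop's property `(β)` iff its generalized Drazin inverse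
`S` has property `(β)`. -/
theorem propertyBeta_iff_propertyBeta_gdInverse (T S : X →L[ℂ] X) (h : IsGDInverse T S) :
    HasPropertyBeta T ↔ HasPropertyBeta S := by
  obtain ⟨hST, hSTS, hq⟩ := h
  have hTSS : T * S * S = S := by rw [← hST, hSTS]
  have hTS : IsIdempotentElem (T * S) := by
    rw [IsIdempotentElem, ← mul_assoc, mul_assoc T S T, mul_assoc T (S * T) S, hSTS]
  constructor
  · intro hT
    refine hT.of_commute_of_isIdempotentElem hST.symm hTS ?_
    rw [sub_mul, one_mul, hTSS, sub_self]
    exact isQuasinilpotent_zero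
  · intro hS
    refine hS.of_commute_of_isIdempotentElem hST (hST ▸ hTS) ?_
    rw [hST, sub_mul, one_mul, ← neg_sub]
    exact hq.neg

end Paper
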